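/- Let V be an F_2-vector space of finite dimension n ≥ 2 with basis e_1, …, e_n, let e_0 = e_1 + ⋯ + e_n, and set ξ_e = (n+1)·1 + Σ_{i=0}^n X^{e_i} ∈ F_2[V] (where n+1 is reduced mod 2). Then ξ_e ∈ I²[V] and Pf_2(ξ_e) = n − 1, i.e., ξ_e can be written as a sum of n − 1 two-fold Pfister elements (1 + X^u)(1 + X^v) but not fewer. -/

import Mathlib

/-- The augmentation map ε₀ on the group algebra F₂[V]. -/
noncomputable def eps0 (V : Type*) [AddCommGroup V] [Module (ZMod 2) V] :
    AddMonoidAlgebra (ZMod 2) V →ₐ[ZMod 2] ZMod 2 :=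
  AddMonoidAlgebra.lift (ZMod 2) (ZMod 2) V 1

/-- The augmentation ideal I[V] ⊆ F₂[V]. -/
noncomputable def augIdeal (V : Type*) [AddCommGroup V] [Module (ZMod 2) V] :
    Ideal (AddMonoidAlgebra (ZMod 2) V) :=
  RingHom.ker (eps0 V).toRingHom

/-- The map ε₁ : F₂[V] → V, Σ αᵥ Xᵛ ↦ Σ αᵥ v. -/
noncomputable def eps1 (V : Type*) [AddCommGroup V] [Module (ZMod 2) V] :
    AddMonoidAlgebra (ZMod 2) V →+ V :=
  (Finsupp.liftAddHom fun v => (smulAddHom (ZMod 2) V).flip v).comp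
    AddMonoidAlgebra.coeffAddEquiv.toAddMonoidHom

/-- 1-fold Pfister elements 1 + Xᵛ. -/
def IsPfister1 {V : Type*} [AddCommGroup V] [Module (ZMod 2) V]
    (x : AddMonoidAlgebra (ZMod 2) V) : Prop :=
  ∃ v : V, x = 1 + AddMonoidAlgebra.single v 1

/-- 2-fold Pfister elements (1 + Xᵘ)(1 + Xᵛ). -/
def IsPfister2 {V : Type*} [AddCommGroup V] [Module (ZMod 2) V]
    (x : AddMonoidAlgebra (ZMod 2) V) : Prop :=
  ∃ u v : V, x = (1 + AddMonoidAlgebra.single u 1) * (1 + AddMonoidAlgebra.single v 1)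

/-- m-fold Pfister elements (1 + X^{v₁})⋯(1 + X^{v_m}). -/
def IsPfister {V : Type*} [AddCommGroup V] [Module (ZMod 2) V] (m : ℕ)
    (x : AddMonoidAlgebra (ZMod 2) V) : Prop :=
  ∃ v : Fin m → V, x = ∏ i, (1 + AddMonoidAlgebra.single (v i) 1)

/-- The m-Pfister number: least number of m-fold Pfister elements summing to x. -/
noncomputable def PfNum {V : Type*} [AddCommGroup V] [Module (ZMod 2) V] (m : ℕ)
    (x : AddMonoidAlgebra (ZMod 2) V) : ℕ :=
  sInf {r | ∃ f : Fin r → AddMonoidAlgebra (ZMod 2) V,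
    (∀ i, IsPfister m (f i)) ∧ x = ∑ i, f i}

/-! Peeling off the last vector, `ξ_{e'.snoc w} = ξ_{e'} + (1 + X^{∑ e'})(1 + X^w)`, so `ξ_e` is a
sum of `n - 1` two-fold Pfister elements. Conversely, `X^w` occurs in `ξ_e` with coefficient `1`, so
in any decomposition some summand `(1 + X^u)(1 + X^v)` has `w ∈ {u, v, u + v}`. The linear
projection killing `w` and fixing `e'` maps `ξ_e` to `ξ_{e'}` and that summand to `0`, so induction
on `n` shows that at least `n - 1` summands are needed. -/

open scoped AddMonoidAlgebra
open AddMonoidAlgebra (single mapDomainAlgHom)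

theorem LinearIndependent.exists_linearMap_comp_eq_update {ι K V : Type*} [DivisionRing K]
    [AddCommGroup V] [Module K V] [DecidableEq ι] {e : ι → V} (he : LinearIndependent K e)
    (j : ι) : ∃ φ : V →ₗ[K] V, φ ∘ e = Function.update e j 0 := by
  obtain ⟨g, hg⟩ := LinearMap.exists_leftInverse_of_injective _ (linearIndependent_iff_ker.1 he)
  have hge (i : ι) : g (e i) = Finsupp.single i 1 := by
    simpa using LinearMap.congr_fun hg (Finsupp.single i 1)
  refine ⟨LinearMap.id - LinearMap.toSpanSingleton K V (e j) ∘ₗ Finsupp.lapply j ∘ₗ g,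
    funext fun i => ?_⟩
  rcases eq_or_ne i j with rfl | hij
  · simp [hge]
  · simp [hge, hij, Ne.symm hij]

theorem pfNum_eq_of_forall_le {V : Type*} [AddCommGroup V] [Module (ZMod 2) V] {m r : ℕ}
    {x : (ZMod 2)[V]} (hr : ∃ f : Fin r → (ZMod 2)[V], (∀ i, IsPfister m (f i)) ∧ x = ∑ i, f i)
    (hle : ∀ r' (f : Fin r' → (ZMod 2)[V]), (∀ i, IsPfister m (f i)) → x = ∑ i, f i → r ≤ r') :
    PfNum m x = r :=
  le_antisymm (Nat.sInf_le hr) (le_csInf ⟨r, hr⟩ fun r' ⟨f, hf, hx⟩ => hle r' f hf hx)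

section AddCommMonoid

variable {V W : Type*} [AddCommMonoid V] [AddCommMonoid W]

theorem one_add_single_zero : (1 + single (0 : V) 1 : (ZMod 2)[V]) = 0 := by
  rw [← AddMonoidAlgebra.one_def, ZModModule.add_self]

noncomputable def pfister2 (u v : V) : (ZMod 2)[V] := (1 + single u 1) * (1 + single v 1)

theorem pfister2_eq (u v : V) :
    pfister2 u v = 1 + single u 1 + single v 1 + single (u + v) 1 := by
  simp only [pfister2, add_mul, mul_add, one_mul, mul_one, AddMonoidAlgebra.single_mul_single]
  abel

theorem pfister2_zero_left (v : V) : pfister2 0 v = 0 := by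
  rw [pfister2, one_add_single_zero, zero_mul]

theorem pfister2_zero_right (u : V) : pfister2 u 0 = 0 := by
  rw [pfister2, one_add_single_zero, mul_zero]

theorem eq_of_coeff_pfister2_ne_zero {u v w : V} (hw : w ≠ 0) (h : (pfister2 u v).coeff w ≠ 0) :
    w = u ∨ w = v ∨ w = u + v := by
  classical
  contrapose! h
  simp [pfister2_eq, AddMonoidAlgebra.one_def, hw.symm, h.1.symm, h.2.1.symm, h.2.2.symm]

theorem map_pfister2 (φ : V →+ W) (u v : V) :
    mapDomainAlgHom (ZMod 2) (ZMod 2) φ (pfister2 u v) = pfister2 (φ u) (φ v) := by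
  simp only [pfister2, map_mul, map_add, map_one, AddMonoidAlgebra.mapDomainAlgHom_apply,
    AddMonoidAlgebra.mapDomain_single]

noncomputable def xi {n : ℕ} (e : Fin n → V) : (ZMod 2)[V] :=
  ((n + 1 : ℕ) : (ZMod 2)[V]) + single (∑ i, e i) 1 + ∑ i, single (e i) 1

theorem xi_fin_zero (e : Fin 0 → V) : xi e = 0 := by
  simp [xi, AddMonoidAlgebra.one_def, ZModModule.add_self]

theorem xi_snoc {n : ℕ} (e : Fin n → V) (w : V) :
    xi (Fin.snoc e w : Fin (n + 1) → V) = xi e + pfister2 (∑ i, e i) w := by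
  simp only [xi, pfister2_eq, Fin.sum_univ_castSucc, Fin.snoc_castSucc, Fin.snoc_last]
  push_cast
  linear_combination -ZModModule.add_self (single (∑ i, e i) 1 : (ZMod 2)[V])

theorem map_xi {n : ℕ} (φ : V →+ W) (e : Fin n → V) :
    mapDomainAlgHom (ZMod 2) (ZMod 2) φ (xi e) = xi (φ ∘ e) := by
  simp only [xi, map_add, map_natCast, map_sum, AddMonoidAlgebra.mapDomainAlgHom_apply,
    AddMonoidAlgebra.mapDomain_single, Function.comp_apply]

end AddCommMonoid

section ZModTwo

variable {V W : Type*} [AddCommGroup V] [Module (ZMod 2) V] [AddCommGroup W] [Module (ZMod 2) W]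

theorem isPfister_two_iff {x : (ZMod 2)[V]} : IsPfister 2 x ↔ IsPfister2 x :=
  ⟨fun ⟨v, hv⟩ => ⟨v 0, v 1, by rw [hv, Fin.prod_univ_two]⟩,
    fun ⟨u, v, h⟩ => ⟨![u, v], by rw [h, Fin.prod_univ_two]; rfl⟩⟩

theorem one_add_single_mem_augIdeal (v : V) : 1 + single v 1 ∈ augIdeal V := by
  rw [augIdeal, RingHom.mem_ker]
  simp [eps0, AddMonoidAlgebra.lift_single, ZModModule.add_self]

theorem pfister2_self (u : V) : pfister2 u u = 0 := by
  rw [pfister2_eq, ZModModule.add_self u, add_assoc (1 : (ZMod 2)[V]), ZModModule.add_self,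
    add_zero, ← AddMonoidAlgebra.one_def, ZModModule.add_self]

theorem pfister2_eq_zero_of {u v : V} (h : u = 0 ∨ v = 0 ∨ u + v = 0) : pfister2 u v = 0 := by
  rcases h with rfl | rfl | h
  · exact pfister2_zero_left v
  · exact pfister2_zero_right u
  · rw [← ZModModule.neg_eq_self u, neg_eq_of_add_eq_zero_right h, pfister2_self]

theorem IsPfister2.map {x : (ZMod 2)[V]} (hx : IsPfister2 x) (φ : V →+ W) :
    IsPfister2 (mapDomainAlgHom (ZMod 2) (ZMod 2) φ x) := by
  obtain ⟨u, v, rfl⟩ := hx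
  exact ⟨φ u, φ v, map_pfister2 φ u v⟩

theorem IsPfister2.map_eq_zero {x : (ZMod 2)[V]} (hx : IsPfister2 x) {φ : V →+ W} {w : V}
    (hw : w ≠ 0) (hxw : x.coeff w ≠ 0) (hφw : φ w = 0) :
    mapDomainAlgHom (ZMod 2) (ZMod 2) φ x = 0 := by
  obtain ⟨u, v, rfl⟩ := hx
  rw [← pfister2, map_pfister2]
  apply pfister2_eq_zero_of
  rcases eq_of_coeff_pfister2_ne_zero hw hxw with rfl | rfl | rfl
  · exact .inl hφw
  · exact .inr (.inl hφw)
  · exact .inr (.inr (by rw [← map_add, hφw]))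

theorem IsPfister2.mem_augIdeal_sq {x : (ZMod 2)[V]} (hx : IsPfister2 x) :
    x ∈ augIdeal V ^ 2 := by
  obtain ⟨u, v, rfl⟩ := hx
  rw [sq]
  exact Ideal.mul_mem_mul (one_add_single_mem_augIdeal u) (one_add_single_mem_augIdeal v)

theorem coeff_xi_apply {n : ℕ} {e : Fin n → V} (he : LinearIndependent (ZMod 2) e) (hn : 2 ≤ n)
    (j : Fin n) : (xi e).coeff (e j) = 1 := by
  classical
  have hsum : ∑ i, e i ≠ e j := by
    have := Fin.nontrivial_iff_two_le.2 hn
    obtain ⟨i, hij⟩ := exists_ne j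
    intro h
    have := Fintype.linearIndependent_iffₛ.1 he 1 (Pi.single j 1) (by simpa using h) i
    simp [hij] at this
  simp [xi, AddMonoidAlgebra.natCast_def, AddMonoidAlgebra.one_def, Finsupp.single_apply,
    he.ne_zero j, hsum, he.injective.eq_iff]

theorem exists_isPfister2_sum_eq_xi : ∀ {n : ℕ} (e : Fin n → V),
    ∃ f : Fin (n - 1) → (ZMod 2)[V], (∀ i, IsPfister2 (f i)) ∧ xi e = ∑ i, f i
  | 0, e => ⟨finZeroElim, finZeroElim, by simp [xi_fin_zero]⟩
  | 1, e => ⟨finZeroElim, finZeroElim, by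
      rw [← Fin.snoc_init_self e, xi_snoc, xi_fin_zero, Fin.sum_univ_zero, pfister2_zero_left,
        add_zero, Fin.sum_univ_zero]⟩
  | n + 2, e => by
      obtain ⟨f, hf, hxi⟩ : ∃ f : Fin n → (ZMod 2)[V], (∀ i, IsPfister2 (f i)) ∧
          xi (Fin.init e) = ∑ i, f i := exists_isPfister2_sum_eq_xi (Fin.init e)
      have hsnoc := xi_snoc (Fin.init e) (e (Fin.last _))
      rw [Fin.snoc_init_self] at hsnoc
      refine ⟨Fin.snoc f (pfister2 (∑ i, Fin.init e i) (e (Fin.last _))), fun i => ?_, ?_⟩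
      · cases i using Fin.lastCases with
        | last => rw [Fin.snoc_last]; exact ⟨_, _, rfl⟩
        | cast i => rw [Fin.snoc_castSucc]; exact hf i
      · rw [hsnoc, hxi]
        exact (Fin.sum_snoc _ f).symm

theorem le_card_of_xi_eq_sum {ι : Type*} {n : ℕ} {e : Fin n → V}
    (he : LinearIndependent (ZMod 2) e) {s : Finset ι} {f : ι → (ZMod 2)[V]}
    (hf : ∀ i ∈ s, IsPfister2 (f i)) (hxi : xi e = ∑ i ∈ s, f i) : n - 1 ≤ s.card := by
  classical
  induction n generalizing s f with
  | zero => simp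
  | succ n ih =>
    obtain _ | n := n
    · simp
    obtain ⟨e, w, rfl⟩ : ∃ e' w, e = Fin.snoc e' w :=
      ⟨Fin.init e, e (Fin.last _), (Fin.snoc_init_self e).symm⟩
    have hw : ∑ i ∈ s, (f i).coeff w ≠ 0 := by
      have := coeff_xi_apply he (by omega) (Fin.last _)
      rw [Fin.snoc_last, hxi, AddMonoidAlgebra.coeff_sum, Finsupp.finsetSum_apply] at this
      exact this ▸ one_ne_zero
    obtain ⟨i₀, hi₀, hi₀w⟩ := Finset.exists_ne_zero_of_sum_ne_zero hw
    obtain ⟨φ, hφ⟩ := he.exists_linearMap_comp_eq_update (Fin.last _)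
    rw [Fin.update_snoc_last] at hφ
    have hφw : φ w = 0 := by simpa using congr_fun hφ (Fin.last _)
    set Φ := mapDomainAlgHom (ZMod 2) (ZMod 2) φ.toAddMonoidHom
    have hΦ : xi e = ∑ i ∈ s.erase i₀, Φ (f i) := calc
      xi e = xi (Fin.snoc e 0) := by rw [xi_snoc, pfister2_zero_right, add_zero]
      _ = Φ (xi (Fin.snoc e w)) := by rw [map_xi, ← hφ]; rfl
      _ = ∑ i ∈ s.erase i₀, Φ (f i) := by
        rw [hxi, map_sum, ← Finset.add_sum_erase s _ hi₀,
          (hf i₀ hi₀).map_eq_zero (by simpa using he.ne_zero (Fin.last _)) hi₀w hφw, zero_add]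
    have hcard := ih (linearIndependent_finSnoc.1 he).1
      (fun i hi => (hf i (Finset.mem_of_mem_erase hi)).map _) hΦ
    have := Finset.card_erase_add_one hi₀
    omega

end ZModTwo

theorem pfNum_two_generic_general (V : Type*) [AddCommGroup V] [Module (ZMod 2) V]
    (n : ℕ) (e : Module.Basis (Fin n) (ZMod 2) V) :
    ((n + 1 : ℕ) : AddMonoidAlgebra (ZMod 2) V)
        + AddMonoidAlgebra.single (∑ i, e i) 1
        + ∑ i, AddMonoidAlgebra.single (e i) 1 ∈ (augIdeal V) ^ 2 ∧
    PfNum 2 (((n + 1 : ℕ) : AddMonoidAlgebra (ZMod 2) V)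
        + AddMonoidAlgebra.single (∑ i, e i) 1
        + ∑ i, AddMonoidAlgebra.single (e i) 1) = n - 1 := by
  change xi ⇑e ∈ _ ∧ PfNum 2 (xi ⇑e) = n - 1
  obtain ⟨f, hf, hxi⟩ := exists_isPfister2_sum_eq_xi ⇑e
  refine ⟨hxi ▸ Ideal.sum_mem _ fun i _ => (hf i).mem_augIdeal_sq, ?_⟩
  refine pfNum_eq_of_forall_le ⟨f, fun i => isPfister_two_iff.2 (hf i), hxi⟩ fun r g hg hxi' => ?_
  simpa using le_card_of_xi_eq_sum e.linearIndependent (s := Finset.univ)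
    (fun i _ => isPfister_two_iff.1 (hg i)) hxi'

/-- For a basis e₁, …, e_n (n ≥ 2) of V and e₀ = e₁ + ⋯ + e_n, the element
ξ_e = (n+1)·1 + Σ_{i=0}^n X^{e_i} lies in I²[V] and has 2-Pfister number exactly n − 1. -/
theorem pfNum_two_generic (V : Type*) [AddCommGroup V] [Module (ZMod 2) V]
    (n : ℕ) (hn : 2 ≤ n) (e : Module.Basis (Fin n) (ZMod 2) V) :
    ((n + 1 : ℕ) : AddMonoidAlgebra (ZMod 2) V)
        + AddMonoidAlgebra.single (∑ i, e i) 1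
        + ∑ i, AddMonoidAlgebra.single (e i) 1 ∈ (augIdeal V) ^ 2 ∧
    PfNum 2 (((n + 1 : ℕ) : AddMonoidAlgebra (ZMod 2) V)
        + AddMonoidAlgebra.single (∑ i, e i) 1
        + ∑ i, AddMonoidAlgebra.single (e i) 1) = n - 1 :=
  pfNum_two_generic_general V n e
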